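/- arXiv:1611.02089 — 5 statements merged into one kernel-verified Lean document; each statement's English description precedes it below -/
import Mathlib

section
/- Let 𝔤 be the 4-dimensional real Lie algebra with basis f₁, f₂, f₃, f₄ whose only nonzero brackets (up to antisymmetry) are [f₁, f₃] = f₄ and [f₁, f₄] = -f₃ (so f₂ is central; 𝔤 ≅ 𝔯'_{3,0} × ℝ = 𝔢(2) × ℝ). Then for every LCS structure (ω, θ) on 𝔤 one has f₂ ∈ 𝔤_ω and θ(f₂) ≠ 0; in particular, every LCS structure on 𝔤 is of the first kind. -/
/-- **Every LCS structure on `𝔢(2) × ℝ = 𝔯'_{3,0} × ℝ` is of the first kind.**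
Let `𝔤` be the `4`-dimensional real Lie algebra with basis `f₁, f₂, f₃, f₄` and nonzero
brackets `[f₁,f₃] = f₄`, `[f₁,f₄] = -f₃` (so `f₂` is central).  Then for every LCS
structure `(ω, θ)` on `𝔤` one has `f₂ ∈ 𝔤_ω` and `θ(f₂) ≠ 0`; in particular `θ`
restricted to `𝔤_ω` is surjective, i.e. the LCS structure is of the first kind. -/
theorem e2_lcs_first_kind
    {g : Type*} [LieRing g] [LieAlgebra ℝ g]
    (e : Module.Basis (Fin 4) ℝ g)
    (habelian : ∀ i j : Fin 4, i ≠ 0 → j ≠ 0 → ⁅e i, e j⁆ = 0)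
    (hbr2 : ⁅e 0, e 1⁆ = 0)
    (hbr3 : ⁅e 0, e 2⁆ = e 3)
    (hbr4 : ⁅e 0, e 3⁆ = -e 2)
    (ω : g →ₗ[ℝ] g →ₗ[ℝ] ℝ)
    (halt : ∀ x : g, ω x x = 0)
    (hnondeg : ∀ x : g, (∀ y : g, ω x y = 0) → x = 0)
    (θ : g →ₗ[ℝ] ℝ)
    (hθclosed : ∀ x y : g, θ ⁅x, y⁆ = 0)
    (hθne : θ ≠ 0)
    (hlcs : ∀ x y z : g,
      -ω ⁅x, y⁆ z + ω ⁅x, z⁆ y - ω ⁅y, z⁆ x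
        = θ x * ω y z - θ y * ω x z + θ z * ω x y) :
    (∀ y z : g, ω ⁅e 1, y⁆ z + ω y ⁅e 1, z⁆ = 0) ∧
    θ (e 1) ≠ 0 ∧
    (∀ r : ℝ, ∃ x : g, (∀ y z : g, ω ⁅x, y⁆ z + ω y ⁅x, z⁆ = 0) ∧ θ x = r) := by
  -- e 1 is central
  have hcentral : ∀ x : g, ⁅e 1, x⁆ = 0 := by
    have had : LieAlgebra.ad ℝ g (e 1) = 0 := by
      apply e.ext
      intro i
      fin_cases i
      · show ⁅e 1, e 0⁆ = _
        rw [← lie_skew, hbr2]; simp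
      · show ⁅e 1, e 1⁆ = _; simp
      · show ⁅e 1, e 2⁆ = _
        rw [habelian 1 2 (by decide) (by decide)]; simp
      · show ⁅e 1, e 3⁆ = _
        rw [habelian 1 3 (by decide) (by decide)]; simp
    intro x
    have := congrFun (congrArg DFunLike.coe had) x
    simpa using this
  -- skew-symmetry
  have hskew : ∀ x y : g, ω x y = -ω y x := by
    intro x y
    have h := halt (x + y)
    simp only [map_add, LinearMap.add_apply, halt] at h
    linarith
  -- θ vanishes on e 2 and e 3
  have hθ3 : θ (e 2) = 0 := by
    have := hθclosed (e 0) (e 3)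
    rw [hbr4] at this; simpa using this
  have hθ2 : θ (e 3) = 0 := by
    have := hθclosed (e 0) (e 2)
    rwa [hbr3] at this
  have hθ1 : θ (e 1) ≠ 0 := by
    intro ht
    -- then θ (e 0) ≠ 0
    have ha : θ (e 0) ≠ 0 := by
      intro ha
      apply hθne
      apply e.ext
      intro i
      fin_cases i <;> simp [ha, ht, hθ2, hθ3]
    set a := θ (e 0) with haa
    -- relations from the LCS equation
    have R1 := hlcs (e 0) (e 1) (e 2)
    rw [hbr2, hbr3, habelian 1 2 (by decide) (by decide), hθ3, ← haa, ht] at R1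
    simp only [map_zero, LinearMap.zero_apply] at R1
    -- R1 : ω (e 3) (e 1) = a * ω (e 1) (e 2)
    have R2 := hlcs (e 0) (e 1) (e 3)
    rw [hbr2, hbr4, habelian 1 3 (by decide) (by decide), hθ2, ← haa, ht] at R2
    simp only [map_zero, LinearMap.zero_apply, map_neg, LinearMap.neg_apply] at R2
    -- R2 : -ω (e 2) (e 1) = a * ω (e 1) (e 3)
    have R3 := hlcs (e 0) (e 2) (e 3)
    rw [hbr3, hbr4, habelian 2 3 (by decide) (by decide), hθ2, hθ3, ← haa] at R3
    simp only [map_zero, LinearMap.zero_apply, map_neg, LinearMap.neg_apply, halt] at R3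
    -- R3 : 0 = a * ω (e 2) (e 3)
    have h23 : ω (e 2) (e 3) = 0 := by
      have hz : a * ω (e 2) (e 3) = 0 := by linarith [R3]
      exact (mul_eq_zero.mp hz).resolve_left ha
    have hs1 : ω (e 3) (e 1) = -ω (e 1) (e 3) := hskew _ _
    have hs2 : ω (e 2) (e 1) = -ω (e 1) (e 2) := hskew _ _
    have q1 : ω (e 1) (e 2) = a * ω (e 1) (e 3) := by linarith [R2, hs2]
    have q2 : -ω (e 1) (e 3) = a * ω (e 1) (e 2) := by linarith [R1, hs1]
    have h12 : ω (e 1) (e 2) = 0 := by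
      have hkey : (1 + a * a) * ω (e 1) (e 2) = 0 := by linear_combination q1 - a * q2
      have hpos : (1 + a * a) ≠ 0 := by nlinarith [sq_nonneg a]
      exact (mul_eq_zero.mp hkey).resolve_left hpos
    have h13 : ω (e 1) (e 3) = 0 := by
      have : -ω (e 1) (e 3) = 0 := by rw [q2, h12]; ring
      linarith
    -- the degenerate vector
    set b := ω (e 2) (e 0) with hb
    set c := ω (e 3) (e 0) with hc
    have e21 : ω (e 2) (e 1) = 0 := by rw [hs2, h12]; ring
    have e31 : ω (e 3) (e 1) = 0 := by rw [hs1, h13]; ring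
    have e32 : ω (e 3) (e 2) = 0 := by rw [hskew, h23]; ring
    have hx : (c • e 2 - b • e 3 : g) = 0 := by
      apply hnondeg
      intro y
      have hy : ∀ i : Fin 4, ω (c • e 2 - b • e 3) (e i) = 0 := by
        intro i
        have hxi : ω (c • e 2 - b • e 3) (e i)
            = c * ω (e 2) (e i) - b * ω (e 3) (e i) := by
          simp [smul_eq_mul]
        rw [hxi]
        fin_cases i
        · show c * ω (e 2) (e 0) - b * ω (e 3) (e 0) = 0
          rw [← hb, ← hc]; ring
        · show c * ω (e 2) (e 1) - b * ω (e 3) (e 1) = 0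
          rw [e21, e31]; ring
        · show c * ω (e 2) (e 2) - b * ω (e 3) (e 2) = 0
          rw [halt, e32]; ring
        · show c * ω (e 2) (e 3) - b * ω (e 3) (e 3) = 0
          rw [halt, h23]; ring
      have hrepr := e.linearCombination_repr y
      rw [← hrepr, Finsupp.linearCombination_apply, Finsupp.sum, map_sum]
      apply Finset.sum_eq_zero
      intro i _
      rw [map_smul, smul_eq_mul, hy i]
      ring
    have hb0 : b = 0 := by
      have h3 := congrArg (fun z => e.repr z 3) hx
      simpa using h3
    have hc0 : c = 0 := by
      have h2 := congrArg (fun z => e.repr z 2) hx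
      simpa using h2
    -- now e 2 is ω-degenerate, contradiction
    have he2 : (e 2 : g) = 0 := by
      apply hnondeg
      intro y
      have hy : ∀ i : Fin 4, ω (e 2) (e i) = 0 := by
        intro i
        fin_cases i
        · show ω (e 2) (e 0) = 0; rw [← hb, hb0]
        · exact e21
        · exact halt (e 2)
        · exact h23
      have hrepr := e.linearCombination_repr y
      rw [← hrepr, Finsupp.linearCombination_apply, Finsupp.sum, map_sum]
      apply Finset.sum_eq_zero
      intro i _
      rw [map_smul, smul_eq_mul, hy i]
      ring
    exact e.ne_zero 2 he2
  refine ⟨?_, hθ1, ?_⟩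
  · intro y z
    rw [hcentral y, hcentral z]
    simp
  · intro r
    refine ⟨(r / θ (e 1)) • e 1, ?_, ?_⟩
    · intro y z
      rw [smul_lie, smul_lie, hcentral y, hcentral z]
      simp
    · rw [map_smul, smul_eq_mul, div_mul_cancel₀ _ hθ1]
end

section
/- Let m ∈ ℤ with m > 2, and let ρ > 1 be the real number with ρ² + ρ⁻² = m. Then: (i) for every integer k ≥ 0, a_k := ρ^{2k} + ρ^{-2k} is an integer (these satisfy a₀ = 2, a₁ = m and a_{k+1} = m·a_k − a_{k−1}); (ii) for every n ≥ 1, the monic polynomial p(x) = (x − 1)·∏_{k=1}^{n}(x² − a_k x + 1) of degree 2n+1 has integer coefficients and constant term −1; and (iii) the (2n+1) × (2n+1) diagonal real matrix with diagonal entries 1, ρ², ρ⁴, …, ρ^{2n}, ρ^{-2}, ρ^{-4}, …, ρ^{-2n} is similar over ℝ to an integer matrix (the companion matrix of p). -/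
open Polynomial Matrix

private def aSeqLCS (m : ℤ) : ℕ → ℤ
  | 0 => 2
  | 1 => m
  | (k+2) => m * aSeqLCS m (k+1) - aSeqLCS m k

private lemma aSeqLCS_cast (m : ℤ) (ρ : ℝ) (hρ0 : ρ ≠ 0)
    (hρm : ρ ^ 2 + ρ⁻¹ ^ 2 = (m : ℝ)) :
    ∀ k : ℕ, ((aSeqLCS m k : ℤ) : ℝ) = ρ ^ (2 * k) + ρ⁻¹ ^ (2 * k) := by
  have huv : ρ ^ 2 * ρ⁻¹ ^ 2 = 1 := by
    rw [← mul_pow, mul_inv_cancel₀ hρ0, one_pow]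
  have key : ∀ k : ℕ, ((aSeqLCS m k : ℤ) : ℝ) = ρ ^ (2 * k) + ρ⁻¹ ^ (2 * k) ∧
      ((aSeqLCS m (k+1) : ℤ) : ℝ) = ρ ^ (2 * (k+1)) + ρ⁻¹ ^ (2 * (k+1)) := by
    intro k
    induction k with
    | zero =>
      refine ⟨by norm_num [aSeqLCS], ?_⟩
      show ((m : ℤ) : ℝ) = ρ ^ (2 * 1) + ρ⁻¹ ^ (2 * 1)
      rw [show 2 * 1 = 2 by norm_num]
      exact hρm.symm
    | succ k ih =>
      refine ⟨ih.2, ?_⟩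
      show ((m * aSeqLCS m (k+1) - aSeqLCS m k : ℤ) : ℝ) = _
      push_cast
      rw [ih.1, ih.2, ← hρm]
      linear_combination (ρ ^ (2 * k) + ρ⁻¹ ^ (2 * k)) * huv
  exact fun k => (key k).1

private lemma similar_companion {ι : Type*} [Fintype ι] [DecidableEq ι] {M : ℕ}
    (e : ι ≃ Fin (M + 1)) (d : ι → ℝ) (hd : Function.Injective d)
    (p : ℝ[X]) (hmon : p.Monic) (hdeg : p.natDegree = M + 1)
    (hroot : ∀ i, p.eval (d i) = 0) :
    ∃ P : Matrix ι ι ℝ, IsUnit P.det ∧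
      P * Matrix.diagonal d * P⁻¹
        = Matrix.of (fun i j =>
            (if ((e j : ℕ) = (e i : ℕ) + 1) then 1 else 0)
              + (if (e i : ℕ) = M then -(p.coeff (e j)) else 0)) := by
  set P : Matrix ι ι ℝ := Matrix.of (fun i j => d j ^ (e i : ℕ)) with hP
  have hPsub : P = ((vandermonde (d ∘ e.symm)).transpose).submatrix e e := by
    ext i j
    simp [hP, vandermonde, Matrix.transpose_apply, Matrix.submatrix_apply]
  have hdet : P.det ≠ 0 := by
    rw [hPsub, Matrix.det_submatrix_equiv_self, Matrix.det_transpose]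
    rw [Matrix.det_vandermonde_ne_zero_iff]
    exact hd.comp e.symm.injective
  have hunit : IsUnit P.det := isUnit_iff_ne_zero.mpr hdet
  set Nm : Matrix ι ι ℝ := Matrix.of (fun i j =>
            (if ((e j : ℕ) = (e i : ℕ) + 1) then 1 else 0)
              + (if (e i : ℕ) = M then -(p.coeff (e j)) else 0)) with hNm
  have hcomm : Nm * P = P * Matrix.diagonal d := by
    ext i j
    rw [Matrix.mul_apply, Matrix.mul_diagonal]
    have hre : ∀ f : Fin (M+1) → ℝ, ∑ k : ι, f (e k) = ∑ t : Fin (M+1), f t :=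
      fun f => Fintype.sum_equiv e _ _ (fun k => rfl)
    have : ∑ k : ι, Nm i k * P k j
        = ∑ t : Fin (M+1),
            ((if ((t : ℕ) = (e i : ℕ) + 1) then 1 else 0)
              + (if (e i : ℕ) = M then -(p.coeff t) else 0)) * d j ^ (t : ℕ) := by
      exact hre (fun t => ((if ((t : ℕ) = (e i : ℕ) + 1) then 1 else 0)
              + (if (e i : ℕ) = M then -(p.coeff t) else 0)) * d j ^ (t : ℕ))
    rw [this]
    by_cases h : (e i : ℕ) = M
    · -- last row
      have hx := Polynomial.eval_eq_sum_range (p := p) (d j)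
      rw [hdeg, Finset.sum_range_succ, hroot j] at hx
      have hlead : p.coeff (M + 1) = 1 := by
        have := hmon.coeff_natDegree
        rwa [hdeg] at this
      rw [hlead, one_mul] at hx
      have hsum : ∑ i ∈ Finset.range (M+1), p.coeff i * d j ^ i = -(d j ^ (M+1)) := by
        linarith [hx]
      have hnone : ∀ t : Fin (M+1), ¬ ((t : ℕ) = (e i : ℕ) + 1) := by
        intro t ht
        have := t.isLt
        omega
      calc ∑ t : Fin (M+1),
            ((if ((t : ℕ) = (e i : ℕ) + 1) then 1 else 0)
              + (if (e i : ℕ) = M then -(p.coeff t) else 0)) * d j ^ (t : ℕ)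
          = ∑ t : Fin (M+1), -(p.coeff t * d j ^ (t : ℕ)) := by
            apply Finset.sum_congr rfl
            intro t _
            rw [if_neg (hnone t), if_pos h]
            ring
        _ = -(∑ t : Fin (M+1), p.coeff t * d j ^ (t : ℕ)) := by
            rw [Finset.sum_neg_distrib]
        _ = -(∑ i ∈ Finset.range (M+1), p.coeff i * d j ^ i) := by
            rw [Fin.sum_univ_eq_sum_range (fun i => p.coeff i * d j ^ i)]
        _ = d j ^ (M + 1) := by rw [hsum, neg_neg]
        _ = d j ^ (e i : ℕ) * d j := by rw [h, pow_succ]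
    · -- other rows
      have hlt : (e i : ℕ) + 1 < M + 1 := by
        have := (e i).isLt
        omega
      set t0 : Fin (M+1) := ⟨(e i : ℕ) + 1, hlt⟩ with ht0
      have hcond : ∀ t : Fin (M+1), ((t : ℕ) = (e i : ℕ) + 1) ↔ t = t0 := by
        intro t
        rw [Fin.ext_iff]
      calc ∑ t : Fin (M+1),
            ((if ((t : ℕ) = (e i : ℕ) + 1) then 1 else 0)
              + (if (e i : ℕ) = M then -(p.coeff t) else 0)) * d j ^ (t : ℕ)
          = ∑ t : Fin (M+1), (if t = t0 then d j ^ (t : ℕ) else 0) := by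
            apply Finset.sum_congr rfl
            intro t _
            rw [if_neg h]
            by_cases ht : t = t0
            · rw [if_pos ((hcond t).mpr ht), if_pos ht]
              ring
            · rw [if_neg (fun hc => ht ((hcond t).mp hc)), if_neg ht]
              ring
        _ = d j ^ (t0 : ℕ) := by
            rw [Finset.sum_ite_eq' Finset.univ t0 (fun t => d j ^ (t : ℕ))]
            simp
        _ = d j ^ (e i : ℕ) * d j := by rw [ht0, pow_succ]
  refine ⟨P, hunit, ?_⟩
  calc P * Matrix.diagonal d * P⁻¹ = Nm * P * P⁻¹ := by rw [hcomm]
    _ = Nm * (P * P⁻¹) := by rw [Matrix.mul_assoc]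
    _ = Nm := by rw [Matrix.mul_nonsing_inv P hunit, Matrix.mul_one]

/-- **Construction of lattices in dimension ≥ 6 for the LCS Lie groups.**
Let `m ∈ ℤ`, `m > 2`, and `ρ > 1` real with `ρ² + ρ⁻² = m`.  Then:
(i) `a_k = ρ^{2k} + ρ^{-2k}` is an integer for every `k`, with `a₀ = 2`, `a₁ = m` and
`a_{k+1} = m a_k − a_{k−1}`;
(ii) for every `n ≥ 1` the monic polynomial `p(x) = (x−1)·∏_{k=1}^n (x² − a_k x + 1)`
of degree `2n+1` has integer coefficients and constant term `−1`;
(iii) the diagonal matrix `diag(1, ρ², …, ρ^{2n}, ρ^{-2}, …, ρ^{-2n})` is similar over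
`ℝ` to an integer matrix. -/
theorem lattices_lcs_dim_ge_six
    (m : ℤ) (hm : 2 < m) (ρ : ℝ) (hρ : 1 < ρ)
    (hρm : ρ ^ 2 + ρ⁻¹ ^ 2 = (m : ℝ)) :
    (∀ k : ℕ, ∃ a : ℤ, (a : ℝ) = ρ ^ (2 * k) + ρ⁻¹ ^ (2 * k)) ∧
    (ρ ^ (2 * 0) + ρ⁻¹ ^ (2 * 0) = 2) ∧
    (ρ ^ (2 * 1) + ρ⁻¹ ^ (2 * 1) = (m : ℝ)) ∧
    (∀ k : ℕ, 1 ≤ k →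
      ρ ^ (2 * (k + 1)) + ρ⁻¹ ^ (2 * (k + 1))
        = (m : ℝ) * (ρ ^ (2 * k) + ρ⁻¹ ^ (2 * k))
          - (ρ ^ (2 * (k - 1)) + ρ⁻¹ ^ (2 * (k - 1)))) ∧
    (∀ n : ℕ, 1 ≤ n →
      (∃ q : Polynomial ℤ, q.Monic ∧ q.natDegree = 2 * n + 1 ∧ q.coeff 0 = -1 ∧
        q.map (Int.castRingHom ℝ)
          = (X - 1) * ∏ k ∈ Finset.Icc 1 n,
              (X ^ 2 - C (ρ ^ (2 * k) + ρ⁻¹ ^ (2 * k)) * X + 1)) ∧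
      ∃ (P : Matrix (Fin 1 ⊕ Fin n ⊕ Fin n) (Fin 1 ⊕ Fin n ⊕ Fin n) ℝ)
        (N : Matrix (Fin 1 ⊕ Fin n ⊕ Fin n) (Fin 1 ⊕ Fin n ⊕ Fin n) ℤ),
        IsUnit P.det ∧
        P * Matrix.diagonal
            (Sum.elim (fun _ : Fin 1 => (1 : ℝ))
              (Sum.elim (fun i : Fin n => ρ ^ (2 * ((i : ℕ) + 1)))
                (fun i : Fin n => ρ⁻¹ ^ (2 * ((i : ℕ) + 1))))) * P⁻¹
          = N.map (Int.cast : ℤ → ℝ)) := by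
  have hρ0 : ρ ≠ 0 := by positivity
  have hacast := aSeqLCS_cast m ρ hρ0 hρm
  have huv : ρ ^ 2 * ρ⁻¹ ^ 2 = 1 := by
    rw [← mul_pow, mul_inv_cancel₀ hρ0, one_pow]
  refine ⟨fun k => ⟨aSeqLCS m k, hacast k⟩, by norm_num, by simpa using hρm, ?_, ?_⟩
  · -- recurrence
    intro k hk
    obtain ⟨j, rfl⟩ : ∃ j, k = j + 1 := ⟨k - 1, by omega⟩
    simp only [Nat.add_sub_cancel]
    rw [← hρm]
    linear_combination (-(ρ ^ (2 * j)) - ρ⁻¹ ^ (2 * j)) * huv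
  · -- polynomial and matrix
    intro n hn
    -- the integer polynomial
    set q : ℤ[X] := (X - 1) * ∏ k ∈ Finset.Icc 1 n, (X ^ 2 - C (aSeqLCS m k) * X + 1)
      with hq
    have hfacmonic : ∀ k : ℕ, (X ^ 2 - C (aSeqLCS m k) * X + (1 : ℤ[X])).Monic := by
      intro k
      have : (X ^ 2 - C (aSeqLCS m k) * X + (1 : ℤ[X]))
          = X ^ 2 + (1 - C (aSeqLCS m k) * X) := by ring
      rw [this]
      apply Polynomial.monic_X_pow_add
      apply lt_of_le_of_lt (Polynomial.degree_sub_le _ _)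
      apply max_lt
      · exact lt_of_le_of_lt Polynomial.degree_one_le (by norm_num)
      · apply lt_of_le_of_lt (Polynomial.degree_mul_le _ _)
        have h1 : (C (aSeqLCS m k)).degree ≤ 0 := Polynomial.degree_C_le
        have h2 : (X : ℤ[X]).degree = 1 := Polynomial.degree_X
        calc (C (aSeqLCS m k)).degree + (X : ℤ[X]).degree ≤ 0 + 1 := by
              exact add_le_add h1 (le_of_eq h2)
          _ < 2 := by norm_num
    have hfacdeg : ∀ k : ℕ, (X ^ 2 - C (aSeqLCS m k) * X + (1 : ℤ[X])).natDegree = 2 := by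
      intro k
      have : (X ^ 2 - C (aSeqLCS m k) * X + (1 : ℤ[X]))
          = X ^ 2 + (1 - C (aSeqLCS m k) * X) := by ring
      have h2 : (X ^ 2 - C (aSeqLCS m k) * X + (1 : ℤ[X]))
          = C 1 * X ^ 2 + C (-(aSeqLCS m k)) * X + C 1 := by
        rw [Polynomial.C_neg, Polynomial.C_1]
        ring
      rw [h2, Polynomial.natDegree_quadratic one_ne_zero]
    have hX1monic : ((X : ℤ[X]) - 1).Monic := by
      have := Polynomial.monic_X_sub_C (1 : ℤ)
      simpa using this
    have hprodmonic : (∏ k ∈ Finset.Icc 1 n, (X ^ 2 - C (aSeqLCS m k) * X + (1:ℤ[X]))).Monic :=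
      Polynomial.monic_prod_of_monic _ _ (fun k _ => hfacmonic k)
    have hqmonic : q.Monic := hX1monic.mul hprodmonic
    have hqdeg : q.natDegree = 2 * n + 1 := by
      rw [hq, Polynomial.Monic.natDegree_mul hX1monic hprodmonic]
      rw [Polynomial.natDegree_prod _ _ (fun k _ => (hfacmonic k).ne_zero)]
      have : ((X : ℤ[X]) - 1).natDegree = 1 := by
        have := Polynomial.natDegree_X_sub_C (1 : ℤ)
        simpa using this
      rw [this, Finset.sum_congr rfl (fun k _ => hfacdeg k), Finset.sum_const,
        Nat.card_Icc]
      simp [mul_comm]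
      omega
    have hqcoeff : q.coeff 0 = -1 := by
      rw [Polynomial.coeff_zero_eq_eval_zero, hq]
      simp [Polynomial.eval_prod]
    have hqmap : q.map (Int.castRingHom ℝ)
        = (X - 1) * ∏ k ∈ Finset.Icc 1 n,
            (X ^ 2 - C (ρ ^ (2 * k) + ρ⁻¹ ^ (2 * k)) * X + 1) := by
      rw [hq, Polynomial.map_mul, Polynomial.map_prod]
      congr 1
      · simp
      · refine Finset.prod_congr rfl (fun k _ => ?_)
        simp only [Polynomial.map_add, Polynomial.map_sub, Polynomial.map_pow,
          Polynomial.map_mul, Polynomial.map_X, Polynomial.map_one, Polynomial.map_C]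
        rw [show (Int.castRingHom ℝ) (aSeqLCS m k) = ((aSeqLCS m k : ℤ) : ℝ) from rfl,
          hacast k]
    refine ⟨⟨q, hqmonic, hqdeg, hqcoeff, hqmap⟩, ?_⟩
    -- matrix part
    set ι := (Fin 1 ⊕ Fin n ⊕ Fin n)
    set d : ι → ℝ := Sum.elim (fun _ : Fin 1 => (1 : ℝ))
              (Sum.elim (fun i : Fin n => ρ ^ (2 * ((i : ℕ) + 1)))
                (fun i : Fin n => ρ⁻¹ ^ (2 * ((i : ℕ) + 1)))) with hd
    set e : ι ≃ Fin (2 * n + 1) :=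
      ((Equiv.sumCongr (Equiv.refl (Fin 1)) finSumFinEquiv).trans
        finSumFinEquiv).trans (finCongr (by omega)) with he
    have hpmonic : (q.map (Int.castRingHom ℝ)).Monic := hqmonic.map _
    have hpdeg : (q.map (Int.castRingHom ℝ)).natDegree = 2 * n + 1 := by
      rw [hqmonic.natDegree_map, hqdeg]
    -- facts about ρ powers
    have hρinv1 : ρ⁻¹ < 1 := inv_lt_one_of_one_lt₀ hρ
    have hρinv0 : (0:ℝ) < ρ⁻¹ := by positivity
    have hgt1 : ∀ i : Fin n, 1 < ρ ^ (2 * ((i : ℕ) + 1)) :=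
      fun i => one_lt_pow₀ hρ (by omega)
    have hlt1 : ∀ i : Fin n, ρ⁻¹ ^ (2 * ((i : ℕ) + 1)) < 1 :=
      fun i => pow_lt_one₀ (le_of_lt hρinv0) hρinv1 (by omega)
    have hpowinj : ∀ a b : ℕ, ρ ^ a = ρ ^ b → a = b := by
      intro a b hab
      by_contra hne
      rcases Nat.lt_or_ge a b with h | h
      · exact absurd hab (ne_of_lt (pow_lt_pow_right₀ hρ h))
      · have : b < a := by omega
        exact absurd hab.symm (ne_of_lt (pow_lt_pow_right₀ hρ this))
    have hdinj : Function.Injective d := by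
      intro x y hxy
      rcases x with x | x | x <;> rcases y with y | y | y <;>
        simp only [hd, Sum.elim_inl, Sum.elim_inr] at hxy
      · exact congrArg Sum.inl (Subsingleton.elim x y)
      · exact absurd hxy.symm (ne_of_gt (hgt1 y))
      · exact absurd hxy (ne_of_gt (hlt1 y))
      · exact absurd hxy (ne_of_gt (hgt1 x))
      · refine congrArg (Sum.inr ∘ Sum.inl) ?_
        have := hpowinj _ _ hxy
        exact Fin.ext (by omega)
      · exact absurd hxy (ne_of_gt (lt_trans (hlt1 y) (hgt1 x)))
      · exact absurd hxy.symm (ne_of_gt (hlt1 x))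
      · exact absurd hxy.symm (ne_of_gt (lt_trans (hlt1 x) (hgt1 y)))
      · refine congrArg (Sum.inr ∘ Sum.inr) ?_
        have hxy' : ρ ^ (2 * ((x : ℕ) + 1)) = ρ ^ (2 * ((y : ℕ) + 1)) := by
          have h2 : (ρ ^ (2 * ((x : ℕ) + 1)))⁻¹ = (ρ ^ (2 * ((y : ℕ) + 1)))⁻¹ := by
            simpa [inv_pow] using hxy
          exact _root_.inv_inj.mp h2
        have := hpowinj _ _ hxy'
        exact Fin.ext (by omega)
    -- roots
    have hroot : ∀ i : ι, (q.map (Int.castRingHom ℝ)).eval (d i) = 0 := by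
      intro i
      rw [hqmap]
      rcases i with i | i | i
      · simp [hd]
      · rw [Polynomial.eval_mul]
        apply mul_eq_zero_of_right
        rw [Polynomial.eval_prod]
        apply Finset.prod_eq_zero (i := (i : ℕ) + 1)
        · exact Finset.mem_Icc.mpr ⟨by omega, by omega⟩
        · simp only [hd, Sum.elim_inr, Sum.elim_inl, Polynomial.eval_add,
            Polynomial.eval_sub, Polynomial.eval_pow, Polynomial.eval_mul,
            Polynomial.eval_X, Polynomial.eval_C, Polynomial.eval_one]
          have hc : ρ⁻¹ ^ (2 * ((i:ℕ) + 1)) * ρ ^ (2 * ((i:ℕ) + 1)) = 1 := by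
            rw [← mul_pow, inv_mul_cancel₀ hρ0, one_pow]
          linear_combination -hc
      · rw [Polynomial.eval_mul]
        apply mul_eq_zero_of_right
        rw [Polynomial.eval_prod]
        apply Finset.prod_eq_zero (i := (i : ℕ) + 1)
        · exact Finset.mem_Icc.mpr ⟨by omega, by omega⟩
        · simp only [hd, Sum.elim_inr, Polynomial.eval_add,
            Polynomial.eval_sub, Polynomial.eval_pow, Polynomial.eval_mul,
            Polynomial.eval_X, Polynomial.eval_C, Polynomial.eval_one]
          have hc : ρ⁻¹ ^ (2 * ((i:ℕ) + 1)) * ρ ^ (2 * ((i:ℕ) + 1)) = 1 := by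
            rw [← mul_pow, inv_mul_cancel₀ hρ0, one_pow]
          linear_combination -hc
    obtain ⟨P, hPunit, hPeq⟩ := similar_companion (M := 2 * n) e d hdinj
      (q.map (Int.castRingHom ℝ)) hpmonic hpdeg hroot
    refine ⟨P, Matrix.of (fun i j =>
        (if ((e j : ℕ) = (e i : ℕ) + 1) then 1 else 0)
          + (if (e i : ℕ) = 2 * n then -(q.coeff (e j)) else 0)), hPunit, ?_⟩
    rw [hPeq]
    ext i j
    simp only [Matrix.map_apply, Matrix.of_apply]
    have hc : (q.map (Int.castRingHom ℝ)).coeff (e j : ℕ) = ((q.coeff (e j : ℕ) : ℤ) : ℝ) := by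
      rw [Polynomial.coeff_map]
      simp
    push_cast
    rw [hc]
end

section
/- For integers n ≥ 1 and p, q ≥ 0, let d^n_{p,q} denote the number of pairs (S, T) of subsets of {1, 2, …, n} with |S| = p, |T| = q, and Σ_{i∈S} i = Σ_{j∈T} j. Then: (i) d^n_{1,1} = n and d^n_{n-1,n-1} = n; (ii) for every 0 ≤ k ≤ n, d^n_{k,k} ≡ C(n,k) (mod 2), where C(n,k) is the binomial coefficient. -/
open Finset

/-- If equal sums force equality on `k`-subsets, the count is `C(n,k)`. -/
lemma dsum_aux (n k : ℕ)
    (h : ∀ S ∈ (Finset.Icc 1 n).powersetCard k, ∀ T ∈ (Finset.Icc 1 n).powersetCard k,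
      S.sum id = T.sum id → S = T) :
    (((Finset.Icc 1 n).powersetCard k ×ˢ (Finset.Icc 1 n).powersetCard k).filter
      fun ST => ST.1.sum id = ST.2.sum id).card = Nat.choose n k := by
  have himg : (((Finset.Icc 1 n).powersetCard k ×ˢ (Finset.Icc 1 n).powersetCard k).filter
      fun ST => ST.1.sum id = ST.2.sum id)
      = ((Finset.Icc 1 n).powersetCard k).image (fun S => (S, S)) := by
    ext ⟨S, T⟩
    simp only [mem_filter, mem_product, mem_image, Prod.mk.injEq]
    constructor
    · rintro ⟨⟨hS, hT⟩, hsum⟩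
      exact ⟨S, hS, rfl, h S hS T hT hsum⟩
    · rintro ⟨U, hU, rfl, rfl⟩
      exact ⟨⟨hU, hU⟩, rfl⟩
  rw [himg, Finset.card_image_of_injective _ (fun a b hab => (Prod.mk.injEq _ _ _ _ ▸ hab).1),
    Finset.card_powersetCard, Nat.card_Icc]
  simp

lemma dsum_parity (n k : ℕ) :
    (((Finset.Icc 1 n).powersetCard k ×ˢ (Finset.Icc 1 n).powersetCard k).filter
      fun ST => ST.1.sum id = ST.2.sum id).card ≡ Nat.choose n k [MOD 2] := by
  classical
  set A := (((Finset.Icc 1 n).powersetCard k ×ˢ (Finset.Icc 1 n).powersetCard k).filter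
      fun ST => ST.1.sum id = ST.2.sum id) with hA
  set D := A.filter (fun ST => ST.1 = ST.2) with hD
  set O := A.filter (fun ST => ST.1 ≠ ST.2) with hO
  have hDO : A.card = D.card + O.card := (Finset.card_filter_add_card_filter_not _).symm
  -- D has card `choose n k`
  have hDcard : D.card = Nat.choose n k := by
    have : D = ((Finset.Icc 1 n).powersetCard k).image (fun S => (S, S)) := by
      ext ⟨S, T⟩
      simp only [hD, hA, mem_filter, mem_product, mem_image, Prod.mk.injEq]
      constructor
      · rintro ⟨⟨⟨hS, hT⟩, hsum⟩, heq⟩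
        exact ⟨S, hS, rfl, heq⟩
      · rintro ⟨U, hU, rfl, rfl⟩
        exact ⟨⟨⟨hU, hU⟩, rfl⟩, rfl⟩
    rw [this, Finset.card_image_of_injective _ (fun a b hab => (Prod.mk.injEq _ _ _ _ ▸ hab).1),
      Finset.card_powersetCard, Nat.card_Icc]
    simp
  -- O has even card, via the swap involution
  have hOeven : 2 ∣ O.card := by
    have hz : ∑ _x ∈ O, (1 : ZMod 2) = 0 := by
      refine Finset.sum_involution (fun a _ => Prod.swap a) ?_ ?_ ?_ ?_
      · intro a _; decide
      · intro a ha hne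
        have : a.1 ≠ a.2 := (Finset.mem_filter.1 ha).2
        intro hsw
        exact this (congrArg Prod.fst hsw).symm
      · intro a ha
        obtain ⟨hmem, hne⟩ := Finset.mem_filter.1 ha
        obtain ⟨hprod, hsum⟩ := Finset.mem_filter.1 hmem
        obtain ⟨h1, h2⟩ := Finset.mem_product.1 hprod
        refine Finset.mem_filter.2 ⟨Finset.mem_filter.2 ⟨Finset.mem_product.2 ⟨h2, h1⟩,
          hsum.symm⟩, fun h => hne h.symm⟩
      · intro a _; rfl
    rw [Finset.sum_const, nsmul_eq_mul, mul_one] at hz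
    exact (ZMod.natCast_eq_zero_iff _ _).1 hz
  rw [hDO, hDcard]
  obtain ⟨m, hm⟩ := hOeven
  rw [hm]
  exact ((Nat.modEq_iff_dvd' (Nat.le_add_right _ _)).2 ⟨m, by omega⟩).symm

lemma inj1 (n : ℕ) : ∀ S ∈ (Finset.Icc 1 n).powersetCard 1,
    ∀ T ∈ (Finset.Icc 1 n).powersetCard 1, S.sum id = T.sum id → S = T := by
  intro S hS T hT hsum
  obtain ⟨a, rfl⟩ := Finset.card_eq_one.1 (Finset.mem_powersetCard.1 hS).2
  obtain ⟨b, rfl⟩ := Finset.card_eq_one.1 (Finset.mem_powersetCard.1 hT).2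
  simp only [Finset.sum_singleton, id] at hsum
  rw [hsum]

lemma injn (n : ℕ) (hn : 1 ≤ n) : ∀ S ∈ (Finset.Icc 1 n).powersetCard (n - 1),
    ∀ T ∈ (Finset.Icc 1 n).powersetCard (n - 1), S.sum id = T.sum id → S = T := by
  intro S hS T hT hsum
  obtain ⟨hSsub, hScard⟩ := Finset.mem_powersetCard.1 hS
  obtain ⟨hTsub, hTcard⟩ := Finset.mem_powersetCard.1 hT
  have hIcc : (Finset.Icc 1 n).card = n := by rw [Nat.card_Icc]; omega
  have hSle : S.card ≤ (Finset.Icc 1 n).card := Finset.card_le_card hSsub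
  have hcS : (Finset.Icc 1 n \ S).card = 1 := by
    rw [Finset.card_sdiff_of_subset hSsub, hIcc, hScard]; omega
  have hcT : (Finset.Icc 1 n \ T).card = 1 := by
    rw [Finset.card_sdiff_of_subset hTsub, hIcc, hTcard]; omega
  obtain ⟨a, ha⟩ := Finset.card_eq_one.1 hcS
  obtain ⟨b, hb⟩ := Finset.card_eq_one.1 hcT
  have h1 : (Finset.Icc 1 n \ S).sum id + S.sum id = (Finset.Icc 1 n).sum id :=
    Finset.sum_sdiff hSsub
  have h2 : (Finset.Icc 1 n \ T).sum id + T.sum id = (Finset.Icc 1 n).sum id :=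
    Finset.sum_sdiff hTsub
  rw [ha, Finset.sum_singleton] at h1
  rw [hb, Finset.sum_singleton] at h2
  simp only [id_eq] at h1 h2 hsum
  have hab : a = b := by omega
  calc S = Finset.Icc 1 n \ (Finset.Icc 1 n \ S) := (Finset.sdiff_sdiff_eq_self hSsub).symm
    _ = Finset.Icc 1 n \ (Finset.Icc 1 n \ T) := by rw [ha, hb, hab]
    _ = T := Finset.sdiff_sdiff_eq_self hTsub

/-- `dSum n p q` is the number of pairs `(S, T)` of subsets of `{1, …, n}` with
`|S| = p`, `|T| = q` and equal element sums. -/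
def dSum (n p q : ℕ) : ℕ :=
  (((Finset.Icc 1 n).powersetCard p ×ˢ (Finset.Icc 1 n).powersetCard q).filter
    fun ST => ST.1.sum id = ST.2.sum id).card

/-- **Lemma on the counts `d^n_{p,q}` (parts (i) and the diagonal parity).**
(i) `d^n_{1,1} = n` and `d^n_{n-1,n-1} = n`;
(ii) `d^n_{k,k} ≡ C(n,k) (mod 2)` for all `0 ≤ k ≤ n`. -/
theorem dSum_diagonal (n : ℕ) (hn : 1 ≤ n) :
    dSum n 1 1 = n ∧
    dSum n (n - 1) (n - 1) = n ∧
    ∀ k : ℕ, k ≤ n → dSum n k k ≡ Nat.choose n k [MOD 2] := by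
  refine ⟨?_, ?_, fun k _ => dsum_parity n k⟩
  · rw [dSum, dsum_aux n 1 (inj1 n), Nat.choose_one_right]
  · rw [dSum, dsum_aux n (n - 1) (injn n hn), Nat.choose_symm hn, Nat.choose_one_right]
end

section
/- For integers n ≥ 1 and p, q ≥ 0, let d^n_{p,q} denote the number of pairs (S, T) of subsets of {1, 2, …, n} with |S| = p, |T| = q, and Σ_{i∈S} i = Σ_{j∈T} j, and set D^n_k := Σ_{p+q=k} d^n_{p,q} (sum over pairs of nonnegative integers p, q with p + q = k). Then: (i) D^n_k = D^n_{2n−k} for all 0 ≤ k ≤ 2n, and D^n_0 = 1, D^n_1 = 0, D^n_2 = n; (ii) if k is odd then D^n_k is even; (iii) D^n_{2k} ≡ C(n,k) (mod 2), where C(n,k) is the binomial coefficient. -/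
open Finset

/-- `DSum n k = Σ_{p+q=k} d^n_{p,q}`. -/
def DSum (n k : ℕ) : ℕ :=
  ∑ p ∈ Finset.range (k + 1), dSum n p (k - p)

/-- The set of all pairs `(S,T)` of subsets of `{1,…,n}` with `|S|+|T| = k`
and equal element sums. -/
def bigSet (n k : ℕ) : Finset (Finset ℕ × Finset ℕ) :=
  ((Finset.Icc 1 n).powerset ×ˢ (Finset.Icc 1 n).powerset).filter
    fun ST => ST.1.card + ST.2.card = k ∧ ST.1.sum id = ST.2.sum id

lemma DSum_eq_card (n k : ℕ) : DSum n k = (bigSet n k).card := by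
  have : bigSet n k = (Finset.range (k+1)).biUnion (fun p =>
      (((Finset.Icc 1 n).powersetCard p ×ˢ (Finset.Icc 1 n).powersetCard (k - p)).filter
        fun ST => ST.1.sum id = ST.2.sum id)) := by
    ext ST
    simp only [bigSet, mem_filter, mem_biUnion, mem_product, mem_powerset, mem_powersetCard,
      mem_range]
    constructor
    · rintro ⟨⟨hS, hT⟩, hcard, hsum⟩
      exact ⟨ST.1.card, by omega, ⟨⟨hS, rfl⟩, hT, by omega⟩, hsum⟩
    · rintro ⟨p, hp, ⟨⟨hS, hSc⟩, hT, hTc⟩, hsum⟩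
      exact ⟨⟨hS, hT⟩, by omega, hsum⟩
  rw [this, card_biUnion]
  · rfl
  · intro p hp q hq hpq
    simp only [mem_coe, mem_range, Function.onFun] at hp hq ⊢
    rw [Finset.disjoint_left]
    rintro ST h1 h2
    simp only [mem_filter, mem_product, mem_powersetCard] at h1 h2
    omega

lemma even_card_of_involution {α : Type*} [DecidableEq α] (A : Finset α) (f : α → α)
    (hmem : ∀ a ∈ A, f a ∈ A) (hinv : ∀ a ∈ A, f (f a) = a) (hne : ∀ a ∈ A, f a ≠ a) :
    Even A.card := by
  induction A using Finset.strongInduction with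
  | _ A ih =>
    rcases A.eq_empty_or_nonempty with rfl | ⟨a, ha⟩
    · simp
    · have hfa := hmem a ha
      have hane := hne a ha
      set A' := A \ {a, f a} with hA'
      have hmem' : ∀ x, x ∈ A' ↔ x ∈ A ∧ x ≠ a ∧ x ≠ f a := by
        intro x; simp only [hA', mem_sdiff, mem_insert, mem_singleton]; tauto
      have hsub : A' ⊂ A := by
        refine Finset.ssubset_iff_of_subset (Finset.sdiff_subset) |>.mpr ⟨a, ha, ?_⟩
        simp [hA']
      have key : Even A'.card := by
        refine ih A' hsub ?_ ?_ ?_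
        · intro x hx
          rw [hmem'] at hx ⊢
          obtain ⟨hxA, hxa, hxfa⟩ := hx
          refine ⟨hmem x hxA, ?_, ?_⟩
          · intro h; apply hxfa; rw [← hinv x hxA, h]
          · intro h
            have := hinv a ha
            apply hxa
            have : f (f x) = f (f a) := by rw [h]
            rwa [hinv x hxA, hinv a ha] at this
        · intro x hx; exact hinv x ((hmem' x).mp hx).1
        · intro x hx; exact hne x ((hmem' x).mp hx).1
      have hsubset : ({a, f a} : Finset α) ⊆ A := by
        intro x hx; simp at hx; rcases hx with rfl | rfl; exact ha; exact hfa
      have hcard2 : ({a, f a} : Finset α).card = 2 := by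
        rw [card_insert_of_notMem (by simpa using (Ne.symm hane)), card_singleton]
      have : A.card = A'.card + 2 := by
        rw [hA', card_sdiff_of_subset hsubset, hcard2]
        have := Finset.card_le_card hsubset
        omega
      rw [this]
      exact key.add (even_two)

lemma sum_eq_zero_empty {n : ℕ} {S : Finset ℕ} (hS : S ⊆ Finset.Icc 1 n)
    (h : S.sum id = 0) : S = ∅ := by
  rw [Finset.sum_eq_zero_iff] at h
  rw [Finset.eq_empty_iff_forall_notMem]
  intro x hx
  have h1 := hS hx
  simp only [Finset.mem_Icc] at h1
  have := h x hx
  simp at this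
  omega

lemma bigSet_modEq (n k : ℕ) :
    (bigSet n k).card ≡ ((bigSet n k).filter fun ST => ST.1 = ST.2).card [MOD 2] := by
  classical
  have hsplit := Finset.card_filter_add_card_filter_not
    (s := bigSet n k) (p := fun ST => ST.1 = ST.2)
  have heven : Even ((bigSet n k).filter fun ST => ¬ ST.1 = ST.2).card := by
    apply even_card_of_involution _ Prod.swap
    · intro a ha
      simp only [mem_filter, bigSet, mem_product, mem_powerset, Prod.fst_swap,
        Prod.snd_swap] at ha ⊢
      obtain ⟨⟨⟨h1, h2⟩, h3, h4⟩, h5⟩ := ha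
      exact ⟨⟨⟨h2, h1⟩, by omega, h4.symm⟩, fun h => h5 h.symm⟩
    · intro a _; exact Prod.swap_swap a
    · intro a ha
      simp only [mem_filter] at ha
      intro h
      exact ha.2 (congrArg Prod.snd h)
  obtain ⟨m, hm⟩ := heven
  unfold Nat.ModEq
  omega

lemma bigSet_fixed_even (n k : ℕ) :
    ((bigSet n (2 * k)).filter fun ST => ST.1 = ST.2) =
      ((Finset.Icc 1 n).powersetCard k).image (fun S => (S, S)) := by
  ext ⟨S, T⟩
  simp only [mem_filter, bigSet, mem_product, mem_powerset, mem_image, mem_powersetCard]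
  constructor
  · rintro ⟨⟨⟨h1, h2⟩, h3, h4⟩, h5⟩
    subst h5
    exact ⟨S, ⟨h1, by omega⟩, rfl⟩
  · rintro ⟨S', ⟨hS, hSc⟩, h⟩
    obtain ⟨rfl, rfl⟩ := Prod.mk.injEq .. |>.mp h
    exact ⟨⟨⟨hS, hS⟩, show S'.card + S'.card = 2 * k by omega, rfl⟩, rfl⟩

lemma bigSet_fixed_odd (n k : ℕ) (hk : Odd k) :
    ((bigSet n k).filter fun ST => ST.1 = ST.2) = ∅ := by
  rw [Finset.eq_empty_iff_forall_notMem]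
  rintro ⟨S, T⟩ h
  simp only [mem_filter, bigSet, mem_product] at h
  obtain ⟨⟨_, h3, _⟩, h5⟩ := h
  subst h5
  obtain ⟨m, hm⟩ := hk
  omega

lemma mem_bigSet_compl {n k : ℕ} {ST : Finset ℕ × Finset ℕ} (h : ST ∈ bigSet n k) :
    (Finset.Icc 1 n \ ST.1, Finset.Icc 1 n \ ST.2) ∈ bigSet n (2 * n - k) := by
  obtain ⟨S, T⟩ := ST
  simp only [bigSet, mem_filter, mem_product, mem_powerset] at h ⊢
  obtain ⟨⟨h1, h2⟩, h3, h4⟩ := h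
  have hS := Finset.card_le_card h1
  have hT := Finset.card_le_card h2
  have hcic : (Finset.Icc 1 n).card = n := by simp
  refine ⟨⟨Finset.sdiff_subset, Finset.sdiff_subset⟩, ?_, ?_⟩
  · rw [card_sdiff_of_subset h1, card_sdiff_of_subset h2, hcic]; omega
  · have e1 := Finset.sum_sdiff (f := id) h1
    have e2 := Finset.sum_sdiff (f := id) h2
    have h4' : (∑ x ∈ S, id x) = ∑ x ∈ T, id x := h4
    show (∑ x ∈ Finset.Icc 1 n \ S, id x) = ∑ x ∈ Finset.Icc 1 n \ T, id x
    omega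

lemma bigSet_card_symm (n k : ℕ) (hk : k ≤ 2 * n) :
    (bigSet n k).card = (bigSet n (2 * n - k)).card := by
  have hkk : 2 * n - (2 * n - k) = k := by omega
  apply Finset.card_nbij' (i := fun ST => (Finset.Icc 1 n \ ST.1, Finset.Icc 1 n \ ST.2))
    (j := fun ST => (Finset.Icc 1 n \ ST.1, Finset.Icc 1 n \ ST.2))
  · intro a ha; exact mem_bigSet_compl ha
  · intro a ha; have := mem_bigSet_compl ha; rwa [hkk] at this
  · intro a ha
    obtain ⟨S, T⟩ := a
    simp only [mem_coe, bigSet, mem_filter, mem_product, mem_powerset] at ha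
    simp [Finset.sdiff_sdiff_eq_self ha.1.1, Finset.sdiff_sdiff_eq_self ha.1.2]
  · intro a ha
    obtain ⟨S, T⟩ := a
    simp only [mem_coe, bigSet, mem_filter, mem_product, mem_powerset] at ha
    simp [Finset.sdiff_sdiff_eq_self ha.1.1, Finset.sdiff_sdiff_eq_self ha.1.2]

lemma bigSet_zero (n : ℕ) : bigSet n 0 = {(∅, ∅)} := by
  ext ⟨S, T⟩
  simp only [bigSet, mem_filter, mem_product, mem_powerset, mem_singleton, Prod.mk.injEq]
  constructor
  · rintro ⟨⟨h1, h2⟩, h3, h4⟩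
    have hc : S.card = 0 ∧ T.card = 0 := by omega
    exact ⟨card_eq_zero.mp hc.1, card_eq_zero.mp hc.2⟩
  · rintro ⟨rfl, rfl⟩; simp

lemma bigSet_one (n : ℕ) : bigSet n 1 = ∅ := by
  rw [eq_empty_iff_forall_notMem]
  rintro ⟨S, T⟩ h
  simp only [bigSet, mem_filter, mem_product, mem_powerset] at h
  obtain ⟨⟨h1, h2⟩, h3, h4⟩ := h
  rcases Nat.eq_zero_or_pos S.card with hS | hS
  · obtain rfl : S = ∅ := card_eq_zero.mp hS
    simp only [Finset.sum_empty] at h4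
    obtain rfl := sum_eq_zero_empty h2 h4.symm
    simp at h3
  · have hT : T.card = 0 := by omega
    obtain rfl : T = ∅ := card_eq_zero.mp hT
    simp only [Finset.sum_empty] at h4
    obtain rfl := sum_eq_zero_empty h1 h4
    simp at h3

lemma bigSet_two (n : ℕ) : bigSet n 2 = (Finset.Icc 1 n).image (fun i => ({i}, {i})) := by
  ext ⟨S, T⟩
  simp only [bigSet, mem_filter, mem_product, mem_powerset, mem_image, Prod.mk.injEq]
  constructor
  · rintro ⟨⟨h1, h2⟩, h3, h4⟩
    rcases Nat.lt_trichotomy S.card 1 with h | h | h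
    · obtain rfl : S = ∅ := card_eq_zero.mp (by omega)
      simp only [Finset.sum_empty] at h4
      obtain rfl := sum_eq_zero_empty h2 h4.symm
      simp at h3
    · have hT : T.card = 1 := by omega
      obtain ⟨a, rfl⟩ := card_eq_one.mp h
      obtain ⟨b, rfl⟩ := card_eq_one.mp hT
      simp only [Finset.sum_singleton, id] at h4
      subst h4
      exact ⟨a, h1 (mem_singleton_self a), rfl, rfl⟩
    · have hT : T.card = 0 := by omega
      obtain rfl : T = ∅ := card_eq_zero.mp hT
      simp only [Finset.sum_empty] at h4
      obtain rfl := sum_eq_zero_empty h1 h4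
      simp at h3
  · rintro ⟨i, hi, rfl, rfl⟩
    refine ⟨⟨?_, ?_⟩, by simp, rfl⟩ <;> simpa using hi

/-- **Lemma on the numbers `D^n_k` (parts (iii)–(v) of the lemma).**
(i) `D^n_k = D^n_{2n−k}` for `0 ≤ k ≤ 2n`, with `D^n_0 = 1`, `D^n_1 = 0`, `D^n_2 = n`;
(ii) if `k` is odd then `D^n_k` is even;
(iii) `D^n_{2k} ≡ C(n,k) (mod 2)`. -/
theorem DSum_properties (n : ℕ) (hn : 1 ≤ n) :
    (∀ k : ℕ, k ≤ 2 * n → DSum n k = DSum n (2 * n - k)) ∧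
    DSum n 0 = 1 ∧ DSum n 1 = 0 ∧ DSum n 2 = n ∧
    (∀ k : ℕ, Odd k → Even (DSum n k)) ∧
    (∀ k : ℕ, DSum n (2 * k) ≡ Nat.choose n k [MOD 2]) := by
  refine ⟨?_, ?_, ?_, ?_, ?_, ?_⟩
  · intro k hk
    rw [DSum_eq_card, DSum_eq_card, bigSet_card_symm n k hk]
  · rw [DSum_eq_card, bigSet_zero]; simp
  · rw [DSum_eq_card, bigSet_one]; simp
  · rw [DSum_eq_card, bigSet_two,
      card_image_of_injective _ (fun a b h => by
        simpa using (Prod.mk.injEq ({a} : Finset ℕ) {a} {b} {b}).mp h |>.1)]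
    simp
  · intro k hkodd
    have h := bigSet_modEq n k
    rw [bigSet_fixed_odd n k hkodd] at h
    simp only [card_empty] at h
    rw [DSum_eq_card, Nat.even_iff]
    simpa [Nat.ModEq] using h
  · intro k
    have h := bigSet_modEq n (2 * k)
    rw [bigSet_fixed_even] at h
    have himg : (((Finset.Icc 1 n).powersetCard k).image
        (fun S => (S, S))).card = n.choose k := by
      rw [card_image_of_injective _ (fun a b hab => by
        simpa using (Prod.mk.injEq a a b b).mp hab |>.1)]
      simp [Finset.card_powersetCard]
    rw [DSum_eq_card]
    rwa [himg] at h
end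

section
/- Let 𝔤 be a finite-dimensional real Lie algebra admitting two distinct abelian ideals 𝔲 ≠ 𝔳, each of codimension one. Then either 𝔤 is abelian, or the commutator ideal [𝔤, 𝔤] is one-dimensional and contained in the center of 𝔤 (so that 𝔤 is isomorphic to 𝔥₃ × ℝ^s for some s ≥ 0, where 𝔥₃ is the 3-dimensional Heisenberg Lie algebra). In particular, dim[𝔤,𝔤] ≤ 1 and [𝔤,𝔤] ⊆ Z(𝔤). -/
open Module

private lemma codim1_decomp {g : Type*} [AddCommGroup g] [Module ℝ g] [FiniteDimensional ℝ g]
    (S : Submodule ℝ g) (hS : finrank ℝ S + 1 = finrank ℝ g)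
    (v : g) (hv : v ∉ S) (x : g) : ∃ a : ℝ, ∃ w ∈ S, x = a • v + w := by
  have hT : Submodule.span ℝ {v} ⊔ S = ⊤ := by
    apply Submodule.eq_top_of_finrank_eq
    have h1 : S < Submodule.span ℝ {v} ⊔ S := by
      refine lt_of_le_of_ne le_sup_right fun h => hv ?_
      rw [h]
      exact Submodule.mem_sup_left (Submodule.mem_span_singleton_self v)
    have h2 := Submodule.finrank_lt_finrank_of_lt h1
    have h3 := Submodule.finrank_le (Submodule.span ℝ {v} ⊔ S)
    omega
  have hx : x ∈ Submodule.span ℝ {v} ⊔ S := hT ▸ Submodule.mem_top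
  obtain ⟨y, hy, w, hw, hxy⟩ := Submodule.mem_sup.mp hx
  obtain ⟨a, rfl⟩ := Submodule.mem_span_singleton.mp hy
  exact ⟨a, w, hw, hxy.symm⟩

/-- **Uniqueness of the codimension-one abelian ideal (Remark).**
Let `𝔤` be a finite-dimensional real Lie algebra with two distinct abelian ideals
`𝔲 ≠ 𝔳` of codimension one.  Then either `𝔤` is abelian, or the commutator ideal
`[𝔤,𝔤]` is one-dimensional and contained in the center of `𝔤`; in particular
`dim [𝔤,𝔤] ≤ 1` and `[𝔤,𝔤] ⊆ Z(𝔤)`. -/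
theorem two_codim_one_abelian_ideals
    {g : Type*} [LieRing g] [LieAlgebra ℝ g] [FiniteDimensional ℝ g]
    (𝔲 𝔳 : LieIdeal ℝ g) (hne : 𝔲 ≠ 𝔳)
    (habu : ∀ x ∈ 𝔲, ∀ y ∈ 𝔲, ⁅x, y⁆ = 0)
    (habv : ∀ x ∈ 𝔳, ∀ y ∈ 𝔳, ⁅x, y⁆ = 0)
    (hcu : Module.finrank ℝ ↥(𝔲 : Submodule ℝ g) + 1 = Module.finrank ℝ g)
    (hcv : Module.finrank ℝ ↥(𝔳 : Submodule ℝ g) + 1 = Module.finrank ℝ g) :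
    (IsLieAbelian g ∨
      (Module.finrank ℝ ↥((LieAlgebra.derivedSeries ℝ g 1 : LieIdeal ℝ g) : Submodule ℝ g) = 1 ∧
        ∀ x ∈ LieAlgebra.derivedSeries ℝ g 1, ∀ y : g, ⁅y, x⁆ = 0)) ∧
    Module.finrank ℝ ↥((LieAlgebra.derivedSeries ℝ g 1 : LieIdeal ℝ g) : Submodule ℝ g) ≤ 1 ∧
    (∀ x ∈ LieAlgebra.derivedSeries ℝ g 1, ∀ y : g, ⁅y, x⁆ = 0) := by
  classical
  simp only [LieIdeal.toLieSubalgebra_toSubmodule] at hcu hcv ⊢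
  -- extract u₀ ∈ 𝔲 \ 𝔳 and v₀ ∈ 𝔳 \ 𝔲
  have hrk : finrank ℝ (LieSubmodule.toSubmodule 𝔲) = finrank ℝ (LieSubmodule.toSubmodule 𝔳) := by
    have h1 : finrank ℝ (LieSubmodule.toSubmodule 𝔲) + 1 = finrank ℝ g := hcu
    have h2 : finrank ℝ (LieSubmodule.toSubmodule 𝔳) + 1 = finrank ℝ g := hcv
    omega
  have hnleu : ¬ ((LieSubmodule.toSubmodule 𝔲) ≤ (LieSubmodule.toSubmodule 𝔳)) := by
    intro h
    exact hne ((LieSubmodule.toSubmodule_inj _ _).mp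
      (Submodule.eq_of_le_of_finrank_eq h hrk))
  have hnlev : ¬ ((LieSubmodule.toSubmodule 𝔳) ≤ (LieSubmodule.toSubmodule 𝔲)) := by
    intro h
    exact hne ((LieSubmodule.toSubmodule_inj _ _).mp
      (Submodule.eq_of_le_of_finrank_eq h hrk.symm).symm)
  obtain ⟨u₀, hu₀u, hu₀v⟩ := SetLike.not_le_iff_exists.mp hnleu
  obtain ⟨v₀, hv₀v, hv₀u⟩ := SetLike.not_le_iff_exists.mp hnlev
  rw [LieSubmodule.mem_toSubmodule] at hu₀u hv₀v
  rw [LieSubmodule.mem_toSubmodule] at hu₀v hv₀u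
  -- anything in 𝔲 ∩ 𝔳 is central
  have hcent : ∀ z, z ∈ 𝔲 → z ∈ 𝔳 → ∀ y : g, ⁅y, z⁆ = 0 := by
    intro z hzu hzv y
    obtain ⟨a, w, hw, rfl⟩ := codim1_decomp (LieSubmodule.toSubmodule 𝔳) hcv u₀
      (fun h => hu₀v ((LieSubmodule.mem_toSubmodule _).mp h)) y
    rw [LieSubmodule.mem_toSubmodule] at hw
    rw [add_lie, smul_lie, habu u₀ hu₀u z hzu, habv w hw z hzv, smul_zero, add_zero]
  -- key bracket computation
  have hbrk : ∀ x y : g, ⁅x, y⁆ ∈ 𝔲 ∧ ⁅x, y⁆ ∈ 𝔳 ∧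
      ⁅x, y⁆ ∈ Submodule.span ℝ ({⁅u₀, v₀⁆} : Set g) := by
    have hlie_v : ∀ w ∈ 𝔳, (⁅u₀, w⁆ : g) ∈ Submodule.span ℝ ({⁅u₀, v₀⁆} : Set g) := by
      intro w hw
      obtain ⟨c, u, hu, rfl⟩ := codim1_decomp (LieSubmodule.toSubmodule 𝔲) hcu v₀
        (fun h => hv₀u ((LieSubmodule.mem_toSubmodule _).mp h)) w
      rw [LieSubmodule.mem_toSubmodule] at hu
      rw [lie_add, lie_smul, habu u₀ hu₀u u hu, add_zero]
      exact Submodule.smul_mem _ c (Submodule.mem_span_singleton_self _)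
    intro x y
    obtain ⟨a, w, hw, rfl⟩ := codim1_decomp (LieSubmodule.toSubmodule 𝔳) hcv u₀
      (fun h => hu₀v ((LieSubmodule.mem_toSubmodule _).mp h)) x
    obtain ⟨b, w', hw', rfl⟩ := codim1_decomp (LieSubmodule.toSubmodule 𝔳) hcv u₀
      (fun h => hu₀v ((LieSubmodule.mem_toSubmodule _).mp h)) y
    rw [LieSubmodule.mem_toSubmodule] at hw hw'
    have hexp : (⁅a • u₀ + w, b • u₀ + w'⁆ : g) = a • ⁅u₀, w'⁆ - b • ⁅u₀, w⁆ := by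
      have h0 : (⁅w, w'⁆ : g) = 0 := habv w hw w' hw'
      have h1 : (⁅w, u₀⁆ : g) = -⁅u₀, w⁆ := by rw [← lie_skew]
      simp only [add_lie, lie_add, smul_lie, lie_smul, lie_self, smul_zero, zero_add,
        add_zero, h0, h1, smul_neg]
      abel
    rw [hexp]
    have h1u : (⁅u₀, w'⁆ : g) ∈ 𝔲 := by
      rw [← lie_skew]; exact 𝔲.neg_mem (𝔲.lie_mem hu₀u)
    have h2u : (⁅u₀, w⁆ : g) ∈ 𝔲 := by
      rw [← lie_skew]; exact 𝔲.neg_mem (𝔲.lie_mem hu₀u)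
    have h1v : (⁅u₀, w'⁆ : g) ∈ 𝔳 := 𝔳.lie_mem hw'
    have h2v : (⁅u₀, w⁆ : g) ∈ 𝔳 := 𝔳.lie_mem hw
    refine ⟨𝔲.sub_mem (𝔲.smul_mem a h1u) (𝔲.smul_mem b h2u),
      𝔳.sub_mem (𝔳.smul_mem a h1v) (𝔳.smul_mem b h2v),
      Submodule.sub_mem _ (Submodule.smul_mem _ a (hlie_v w' hw'))
        (Submodule.smul_mem _ b (hlie_v w hw))⟩
  -- derived series is contained in span {⁅u₀,v₀⁆} and in 𝔲 ⊓ 𝔳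
  have hDsub : (LieSubmodule.toSubmodule (LieAlgebra.derivedSeries ℝ g 1)) ≤
      Submodule.span ℝ ({⁅u₀, v₀⁆} : Set g) ⊓ ((LieSubmodule.toSubmodule 𝔲) ⊓ (LieSubmodule.toSubmodule 𝔳)) := by
    have : LieAlgebra.derivedSeries ℝ g 1 = ⁅(⊤ : LieIdeal ℝ g), (⊤ : LieIdeal ℝ g)⁆ := by
      rw [LieAlgebra.derivedSeries_def, LieAlgebra.derivedSeriesOfIdeal_succ,
        LieAlgebra.derivedSeriesOfIdeal_zero]
    rw [this, LieSubmodule.lieIdeal_oper_eq_linear_span]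
    rw [Submodule.span_le]
    rintro m ⟨x, n, rfl⟩
    obtain ⟨h1, h2, h3⟩ := hbrk (x : g) (n : g)
    exact ⟨h3, (LieSubmodule.mem_toSubmodule _).mpr h1, (LieSubmodule.mem_toSubmodule _).mpr h2⟩
  -- centrality of derived series
  have hZ : ∀ x ∈ LieAlgebra.derivedSeries ℝ g 1, ∀ y : g, ⁅y, x⁆ = 0 := by
    intro x hx y
    have := hDsub ((LieSubmodule.mem_toSubmodule _).mpr hx)
    exact hcent x ((LieSubmodule.mem_toSubmodule _).mp this.2.1)
      ((LieSubmodule.mem_toSubmodule _).mp this.2.2) y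
  -- dimension bound
  have hle1 : finrank ℝ (LieSubmodule.toSubmodule (LieAlgebra.derivedSeries ℝ g 1)) ≤ 1 := by
    calc finrank ℝ (LieSubmodule.toSubmodule (LieAlgebra.derivedSeries ℝ g 1))
        ≤ finrank ℝ (Submodule.span ℝ ({⁅u₀, v₀⁆} : Set g)) :=
          Submodule.finrank_mono (hDsub.trans inf_le_left)
      _ ≤ 1 := by
          by_cases h : (⁅u₀, v₀⁆ : g) = 0
          · rw [h, Submodule.span_zero_singleton]
            simp
          · rw [finrank_span_singleton h]
  refine ⟨?_, hle1, hZ⟩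
  by_cases h : (⁅u₀, v₀⁆ : g) = 0
  · left
    constructor
    intro x y
    have := (hbrk x y).2.2
    rw [h, Submodule.span_singleton_eq_bot.mpr rfl] at this
    exact this
  · right
    refine ⟨le_antisymm hle1 ?_, hZ⟩
    have hmem : (⁅u₀, v₀⁆ : g) ∈ (LieSubmodule.toSubmodule (LieAlgebra.derivedSeries ℝ g 1)) := by
      have : LieAlgebra.derivedSeries ℝ g 1 = ⁅(⊤ : LieIdeal ℝ g), (⊤ : LieIdeal ℝ g)⁆ := by
        rw [LieAlgebra.derivedSeries_def, LieAlgebra.derivedSeriesOfIdeal_succ,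
          LieAlgebra.derivedSeriesOfIdeal_zero]
      rw [this]
      exact (LieSubmodule.mem_toSubmodule _).mpr
        (LieSubmodule.lie_mem_lie (LieSubmodule.mem_top u₀) (LieSubmodule.mem_top v₀))
    have : Submodule.span ℝ ({⁅u₀, v₀⁆} : Set g) ≤
        (LieSubmodule.toSubmodule (LieAlgebra.derivedSeries ℝ g 1)) := by
      rw [Submodule.span_le, Set.singleton_subset_iff]; exact hmem
    calc (1 : ℕ) = finrank ℝ (Submodule.span ℝ ({⁅u₀, v₀⁆} : Set g)) :=
          (finrank_span_singleton h).symm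
      _ ≤ _ := Submodule.finrank_mono this
end
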